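/- arXiv:1912.11867 — 5 statements merged into one kernel-verified Lean document; each statement's English description precedes it below -/
import Mathlib

section
/- Every abstract group homomorphism from a compact Hausdorff topological group K to a torsion-free group G containing no subgroup isomorphic to ℚ and no subgroup isomorphic to the p-adic integers ℤ_p for any prime p is trivial. -/
/-!
Fix `k ∈ K`. Limits along a nonprincipal ultrafilter on `ℕ` turn `c ↦ lim k ^ c n` into a
homomorphism `ℤ^ℕ → K` that sends the constant sequence `1` to `k` and kills eventually-zero
sequences; let `ψ : ℤ^ℕ → G` be its composite with `φ`.

If `g n = g (n + 1) ^ (n + 1)` for all `n`, then `q ↦ g m ^ (q * m!)` is a homomorphism `ℚ → G`;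
it is not injective, so torsion-freeness makes it trivial and all `g n = 1`. Applied to
`j ↦ ψ (c / j!)`, this shows that `ψ` kills every `c` with `n! ∣ c n` eventually, so a sequence
matters to `ψ` only prime by prime, like an element of `∏ p, ℤ_[p]`. The same argument (using `ℤ_[p] = m ℤ_[p] + ℤ`) makes every homomorphism
`ℤ_[p] → G` trivial, hence `ψ` kills every sequence living at a single prime. Finally, if `u N`
represents the element that is `0` at primes `≤ N` and `1 / N!` at primes `> N`, then `u N` and
`(N + 1) • u (N + 1)` differ only at the prime `N + 1`, so `N ↦ ψ (u N)` is again such a root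
sequence and `φ k = ψ 1 = ψ (u 0) = 1`.
-/

universe u

/-- Old Mathlib definition (removed since): a monoid is torsion-free if no nontrivial
element has finite order. -/
def Monoid.IsTorsionFree (G : Type*) [Monoid G] : Prop :=
  ∀ g : G, g ≠ 1 → ¬IsOfFinOrder g

/-- `G` has no subgroup isomorphic to the additive rationals `ℚ`. -/
def NoRatSubgroup (G : Type*) [Group G] : Prop :=
  ∀ f : Multiplicative ℚ →* G, ¬ Function.Injective f

/-- `G` has no subgroup isomorphic to the additive `p`-adic integers for any prime `p`. -/
def NoPadicSubgroup (G : Type*) [Group G] : Prop :=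
  ∀ (p : ℕ) [Fact p.Prime], ∀ f : Multiplicative (PadicInt p) →* G, ¬ Function.Injective f

/-- `G` is lcH-slender: every abstract group homomorphism from a locally compact
Hausdorff topological group to `G` has open kernel. -/
def LCHSlender (G : Type*) [Group G] : Prop :=
  ∀ (L : Type u) [Group L] [TopologicalSpace L] [IsTopologicalGroup L]
    [LocallyCompactSpace L] [T2Space L],
    ∀ φ : L →* G, IsOpen (φ.ker : Set L)

open Filter Multiplicative Topology

section

open Nat

namespace Monoid.IsTorsionFree

variable {G : Type*} [Group G]

theorem eq_one_of_pow_eq_one (hG : Monoid.IsTorsionFree G) {x : G} {n : ℕ} (hn : n ≠ 0)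
    (h : x ^ n = 1) : x = 1 :=
  of_not_not fun hx => hG x hx (isOfFinOrder_iff_pow_eq_one.2 ⟨n, Nat.pos_of_ne_zero hn, h⟩)

theorem eq_one_of_zpow_eq_one (hG : Monoid.IsTorsionFree G) {x : G} {n : ℤ} (hn : n ≠ 0)
    (h : x ^ n = 1) : x = 1 :=
  of_not_not fun hx => hG x hx (isOfFinOrder_iff_zpow_eq_one.2 ⟨n, hn, h⟩)

theorem ratHom_eq_one_of_not_injective (hG : Monoid.IsTorsionFree G)
    {f : Multiplicative ℚ →* G} (hf : ¬Function.Injective f) : f = 1 := by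
  obtain ⟨z, hz, hz1⟩ : ∃ z : Multiplicative ℚ, f z = 1 ∧ z ≠ 1 := by
    simpa [injective_iff_map_eq_one] using hf
  refine MonoidHom.ext fun x => ?_
  set s : ℚ := x.toAdd / z.toAdd
  have hzs : (s.den : ℤ) • x.toAdd = s.num • z.toAdd := by
    have hz0 : z.toAdd ≠ 0 := hz1
    rw [zsmul_eq_mul, zsmul_eq_mul, ← Rat.mul_den_eq_num]
    simp only [s]
    push_cast
    field_simp
  apply hG.eq_one_of_zpow_eq_one (n := s.den) (by exact_mod_cast s.den_nz)
  rw [← map_zpow, ← ofAdd_toAdd x, ← ofAdd_zsmul, hzs, ofAdd_zsmul, map_zpow, ofAdd_toAdd, hz,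
    one_zpow]

end Monoid.IsTorsionFree

section RootSeq

variable {G : Type*} [Group G]

def IsFactorialRootSeq (g : ℕ → G) : Prop :=
  ∀ n, g n = g (n + 1) ^ (n + 1)

theorem Rat.cast_num_mul_factorial_div_den {q : ℚ} {m : ℕ} (h : q.den ≤ m) :
    ((q.num * (m ! / q.den : ℕ) : ℤ) : ℚ) = q * m ! := by
  rw [Int.cast_mul, Int.cast_natCast, Nat.cast_div (Nat.dvd_factorial q.pos h) (by simp),
    ← Rat.num_div_den q]
  simp only [Rat.num_div_den]
  field_simp
  rw [mul_comm]
  exact_mod_cast (Rat.mul_den_eq_num q).symm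

namespace IsFactorialRootSeq

variable {g : ℕ → G}

theorem eq_pow_factorial_div (hg : IsFactorialRootSeq g) {m m' : ℕ} (h : m ≤ m') :
    g m = g m' ^ (m' ! / m !) := by
  induction m', h using Nat.le_induction with
  | base => rw [Nat.div_self m.factorial_pos, pow_one]
  | succ m' hm ih =>
    rw [ih, hg m', ← pow_mul, Nat.factorial_succ, Nat.mul_div_assoc _ (factorial_dvd_factorial hm)]

theorem zpow_num_eq (hg : IsFactorialRootSeq g) {q : ℚ} {m m' : ℕ} (h : q.den ≤ m)
    (h' : q.den ≤ m') :
    g m ^ (q.num * (m ! / q.den : ℕ)) = g m' ^ (q.num * (m' ! / q.den : ℕ)) := by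
  wlog hm : m ≤ m' generalizing m m'
  · exact (this h' h (le_of_not_ge hm)).symm
  rw [hg.eq_pow_factorial_div hm, ← zpow_natCast, ← zpow_mul]
  congr 1
  apply Int.cast_injective (α := ℚ)
  rw [Int.cast_mul, Rat.cast_num_mul_factorial_div_den h, Rat.cast_num_mul_factorial_div_den h',
    Int.cast_natCast, Nat.cast_div (factorial_dvd_factorial hm) (by positivity)]
  field_simp

noncomputable def ratHom (hg : IsFactorialRootSeq g) : Multiplicative ℚ →* G :=
  MonoidHom.mk' (fun q => g q.toAdd.den ^ (q.toAdd.num * (q.toAdd.den ! / q.toAdd.den : ℕ))) <| by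
    intro a b
    set m := a.toAdd.den + b.toAdd.den + (a.toAdd + b.toAdd).den
    simp only [toAdd_mul]
    rw [hg.zpow_num_eq le_rfl (show (a.toAdd + b.toAdd).den ≤ m by omega),
      hg.zpow_num_eq le_rfl (show a.toAdd.den ≤ m by omega),
      hg.zpow_num_eq le_rfl (show b.toAdd.den ≤ m by omega), ← zpow_add]
    congr 1
    apply Int.cast_injective (α := ℚ)
    rw [Int.cast_add, Rat.cast_num_mul_factorial_div_den (by omega),
      Rat.cast_num_mul_factorial_div_den (by omega), Rat.cast_num_mul_factorial_div_den (by omega),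
      add_mul]

theorem ratHom_ofAdd_one (hg : IsFactorialRootSeq g) : hg.ratHom (ofAdd 1) = g 1 := by
  simp [ratHom]

theorem eq_one (hg : IsFactorialRootSeq g) (hG : Monoid.IsTorsionFree G) (hQ : NoRatSubgroup G)
    (n : ℕ) : g n = 1 := by
  have hg0 : g 0 = 1 := by
    rw [hg 0, zero_add, pow_one, ← hg.ratHom_ofAdd_one,
      hG.ratHom_eq_one_of_not_injective (hQ hg.ratHom), MonoidHom.one_apply]
  apply hG.eq_one_of_pow_eq_one (factorial_ne_zero n)
  rw [← hg0, hg.eq_pow_factorial_div n.zero_le, factorial_zero, Nat.div_one]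

end IsFactorialRootSeq

end RootSeq

namespace PadicInt

variable {p : ℕ} [Fact p.Prime]

theorem exists_eq_natCast_mul_add_natCast (v : ℤ_[p]) {c : ℕ} (hc : c ≠ 0) :
    ∃ (w : ℤ_[p]) (m : ℕ), v = c * w + m := by
  set k := c.factorization p
  have hc' : (c : ℤ_[p]) = p ^ k * (ordCompl[p] c : ℕ) := by
    exact_mod_cast (Nat.ordProj_mul_ordCompl_eq_self c p).symm
  have hunit : IsUnit ((ordCompl[p] c : ℕ) : ℤ_[p]) := by
    rw [isUnit_iff, norm_natCast_eq_one_iff]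
    exact Nat.coprime_ordCompl Fact.out hc
  obtain ⟨t, ht⟩ := hunit.exists_left_inv
  obtain ⟨y, hy⟩ := Ideal.mem_span_singleton'.1 (appr_spec k v)
  exact ⟨t * y, appr v k, by linear_combination -hy - (t * y) * hc' - (p ^ k * y) * ht⟩

theorem appr_add_modEq (z z' : ℤ_[p]) (n : ℕ) :
    ((z + z').appr n : ℤ) ≡ z.appr n + z'.appr n [ZMOD p ^ n] := by
  rw [← Nat.cast_pow, ← ZMod.intCast_eq_intCast_iff]
  push_cast
  exact map_add (toZModPow n) z z'

theorem appr_one_modEq (n : ℕ) : ((1 : ℤ_[p]).appr n : ℤ) ≡ 1 [ZMOD p ^ n] := by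
  rw [← Nat.cast_pow, ← ZMod.intCast_eq_intCast_iff]
  push_cast
  exact map_one (toZModPow n)

end PadicInt

namespace Monoid.IsTorsionFree

variable {G : Type*} [Group G] {p : ℕ} [Fact p.Prime]

theorem padicHom_eq_one_of_map_one (hG : Monoid.IsTorsionFree G) (hQ : NoRatSubgroup G)
    {f : Multiplicative ℤ_[p] →* G} (h1 : f (ofAdd 1) = 1) : f = 1 := by
  refine MonoidHom.ext fun w => ?_
  choose q m hqm using fun (v : ℤ_[p]) (j : ℕ) =>
    PadicInt.exists_eq_natCast_mul_add_natCast v j.succ_ne_zero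
  let W : ℕ → ℤ_[p] := fun j => Nat.rec (motive := fun _ => ℤ_[p]) w.toAdd (fun j v => q v j) j
  have hW : IsFactorialRootSeq fun j => f (ofAdd (W j)) := by
    intro j
    change f (ofAdd (W j)) = f (ofAdd (q (W j) j)) ^ (j + 1)
    conv_lhs => rw [hqm (W j) j]
    rw [← nsmul_eq_mul, ← nsmul_one, ofAdd_add, ofAdd_nsmul, ofAdd_nsmul, map_mul,
      map_pow, map_pow, h1, one_pow, mul_one]
  exact hW.eq_one hG hQ 0

theorem padicHom_eq_one_of_not_injective (hG : Monoid.IsTorsionFree G) (hQ : NoRatSubgroup G)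
    {f : Multiplicative ℤ_[p] →* G} (hf : ¬Function.Injective f) : f = 1 := by
  obtain ⟨z, hz, hz1⟩ : ∃ z : Multiplicative ℤ_[p], f z = 1 ∧ z ≠ 1 := by
    simpa [injective_iff_map_eq_one] using hf
  have hmul : ∀ w : ℤ_[p], f (ofAdd (z.toAdd * w)) = 1 := fun w =>
    DFunLike.congr_fun (padicHom_eq_one_of_map_one hG hQ (f := f.comp
      (AddMonoidHom.toMultiplicative (AddMonoidHom.mulLeft z.toAdd))) (by simpa using hz))
      (ofAdd w)
  refine MonoidHom.ext fun x => hG.eq_one_of_pow_eq_one (pow_ne_zero z.toAdd.valuation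
    (Fact.out : p.Prime).ne_zero) ?_
  have hz0 : z.toAdd ≠ 0 := hz1
  obtain ⟨u, hu⟩ : ∃ u : ℤ_[p], (p : ℤ_[p]) ^ z.toAdd.valuation = z.toAdd * u :=
    ⟨↑(PadicInt.unitCoeff hz0)⁻¹, by
      linear_combination (-↑(PadicInt.unitCoeff hz0)⁻¹ : ℤ_[p]) * PadicInt.unitCoeff_spec hz0 -
        (p : ℤ_[p]) ^ z.toAdd.valuation * (PadicInt.unitCoeff hz0).mul_inv⟩
  rw [← map_pow, ← ofAdd_toAdd x, ← ofAdd_nsmul, nsmul_eq_mul, Nat.cast_pow, hu, mul_assoc, hmul]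

end Monoid.IsTorsionFree

theorem Nat.factorial_dvd_pow_of_forall_prime_dvd {n m : ℕ} (hm : m ≠ 0)
    (h : ∀ q, q.Prime → q ≤ n → q ∣ m) : n ! ∣ m ^ n := by
  rw [← Nat.factorization_le_iff_dvd (factorial_ne_zero n) (pow_ne_zero n hm)]
  intro q
  by_cases hq : q.Prime
  swap
  · simp [Nat.factorization_eq_zero_of_not_prime _ hq]
  rcases lt_or_ge n q with hnq | hqn
  · simp [Nat.factorization_factorial_eq_zero_of_lt hnq]
  calc (n !).factorization q ≤ n / (q - 1) := Nat.factorization_factorial_le_div_pred hq n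
    _ ≤ n * m.factorization q :=
      (Nat.div_le_self n _).trans (Nat.le_mul_of_pos_right n (hq.factorization_pos_of_dvd hm
        (h q hq hqn)))
    _ = (m ^ n).factorization q := by simp [Nat.factorization_pow]

theorem Int.exists_modEq_zero_and_mul_modEq_one {a b c : ℤ} (h : IsCoprime (c * a) b) :
    ∃ x, x ≡ 0 [ZMOD a] ∧ c * x ≡ 1 [ZMOD b] := by
  obtain ⟨s, t, hst⟩ := h
  exact ⟨a * s, Int.modEq_zero_iff_dvd.2 (dvd_mul_right a s),
    Int.modEq_iff_dvd.2 ⟨t, by linear_combination -hst⟩⟩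

def primesProd (a b : ℕ) : ℕ :=
  ∏ q ∈ Finset.Ioc a b with q.Prime, q

theorem primesProd_ne_zero (a b : ℕ) : primesProd a b ≠ 0 :=
  Finset.prod_ne_zero_iff.2 fun _ hq => (Finset.mem_filter.1 hq).2.ne_zero

theorem prime_dvd_primesProd {a b q : ℕ} (hq : q.Prime) (haq : a < q) (hqb : q ≤ b) :
    q ∣ primesProd a b :=
  Finset.dvd_prod_of_mem _ (Finset.mem_filter.2 ⟨Finset.mem_Ioc.2 ⟨haq, hqb⟩, hq⟩)

theorem primesProd_succ_dvd (a b : ℕ) : primesProd (a + 1) b ∣ primesProd a b :=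
  Finset.prod_dvd_prod_of_subset _ _ _ <| Finset.filter_subset_filter _ <|
    Finset.Ioc_subset_Ioc_left a.le_succ

theorem coprime_factorial_primesProd (a b : ℕ) : Nat.Coprime (a !) (primesProd a b) :=
  Nat.Coprime.prod_right fun q hq => by
    obtain ⟨hq, hqp⟩ := Finset.mem_filter.1 hq
    refine ((Nat.Prime.coprime_iff_not_dvd hqp).2 fun hdvd => ?_).symm
    exact (Finset.mem_Ioc.1 hq).1.not_ge ((Nat.Prime.dvd_factorial hqp).1 hdvd)

theorem prime_dvd_factorial_mul_primesProd {N q n : ℕ} (hq : q.Prime) (hqn : q ≤ n)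
    (hqN : q ≠ N + 1) : q ∣ N ! * primesProd (N + 1) n := by
  rcases le_or_gt q N with hle | hgt
  · exact dvd_mul_of_dvd_left ((Nat.Prime.dvd_factorial hq).2 hle) _
  · exact dvd_mul_of_dvd_right (prime_dvd_primesProd hq (by omega) hqn) _

/-- `x` approximates the element of `∏ p, ℤ_[p]` that is `0` at the primes `≤ N` and `1 / N!` at
the primes `> N`. -/
def IsInvFactorialAbove (N : ℕ) (x : ℕ → ℤ) : Prop :=
  ∀ n, x n ≡ 0 [ZMOD (N ! : ℤ) ^ n] ∧ N ! * x n ≡ 1 [ZMOD (primesProd N n : ℤ) ^ n]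

theorem exists_isInvFactorialAbove (N : ℕ) : ∃ x, IsInvFactorialAbove N x := by
  have hcop (n : ℕ) : IsCoprime ((N ! : ℤ) * (N ! : ℤ) ^ n) ((primesProd N n : ℤ) ^ n) := by
    rw [← pow_succ' (N ! : ℤ) n]
    exact (Nat.isCoprime_iff_coprime.2 (coprime_factorial_primesProd N n)).pow
  choose x hx using fun n => Int.exists_modEq_zero_and_mul_modEq_one (hcop n)
  exact ⟨x, hx⟩

namespace IsInvFactorialAbove

variable {N : ℕ} {x y : ℕ → ℤ}

theorem modEq_one (hx : IsInvFactorialAbove 0 x) (n : ℕ) : x n ≡ 1 [ZMOD n !] := by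
  have hdvd : n ! ∣ primesProd 0 n ^ n :=
    Nat.factorial_dvd_pow_of_forall_prime_dvd (primesProd_ne_zero 0 n) fun q hq hqn =>
      prime_dvd_primesProd hq hq.pos hqn
  simpa using (hx n).2.of_dvd (Int.natCast_dvd_natCast.2 hdvd)

theorem dvd_sub (hx : IsInvFactorialAbove N x) (hy : IsInvFactorialAbove (N + 1) y) (n : ℕ) :
    (((N ! * primesProd (N + 1) n) ^ n : ℕ) : ℤ) ∣ N ! * x n - (N + 1)! * y n := by
  have hfac : (N ! : ℤ) ^ n ∣ N ! * x n - (N + 1)! * y n := by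
    have hy0 : (N ! : ℤ) ^ n ∣ y n :=
      (pow_dvd_pow_of_dvd (Int.natCast_dvd_natCast.2 (factorial_dvd_factorial N.le_succ)) n).trans
        (Int.modEq_zero_iff_dvd.1 (hy n).1)
    exact _root_.dvd_sub (dvd_mul_of_dvd_right (Int.modEq_zero_iff_dvd.1 (hx n).1) _)
      (dvd_mul_of_dvd_right hy0 _)
  have hprimes : (primesProd (N + 1) n : ℤ) ^ n ∣ N ! * x n - (N + 1)! * y n := by
    have hx1 := (hx n).2.of_dvd
      (pow_dvd_pow_of_dvd (Int.natCast_dvd_natCast.2 (primesProd_succ_dvd N n)) n)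
    exact ((hy n).2.trans hx1.symm).dvd
  have hcop : IsCoprime ((N ! : ℤ) ^ n) ((primesProd (N + 1) n : ℤ) ^ n) :=
    (Nat.isCoprime_iff_coprime.2 ((coprime_factorial_primesProd (N + 1) n).coprime_dvd_left
      (factorial_dvd_factorial N.le_succ))).pow
  push_cast [mul_pow]
  exact hcop.mul_dvd hfac hprimes

end IsInvFactorialAbove

section SequenceHom

variable {G : Type*} [Group G] (ψ : Multiplicative (ℕ → ℤ) →* G)

theorem map_eq_one_of_eventually_factorial_dvd (hG : Monoid.IsTorsionFree G)
    (hQ : NoRatSubgroup G) (hψ : ∀ c : ℕ → ℤ, (∀ᶠ n in atTop, c n = 0) → ψ (ofAdd c) = 1)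
    (c : ℕ → ℤ) (hc : ∀ᶠ n in atTop, (n ! : ℤ) ∣ c n) : ψ (ofAdd c) = 1 := by
  have hcongr {a b : ℕ → ℤ} (h : ∀ᶠ n in atTop, a n = b n) : ψ (ofAdd a) = ψ (ofAdd b) := by
    rw [← div_eq_one, ← map_div, ← ofAdd_sub]
    exact hψ _ (h.mono fun n hn => sub_eq_zero.2 hn)
  have hseq : IsFactorialRootSeq fun j => ψ (ofAdd fun n => c n / j !) := by
    intro j
    rw [← map_pow, ← ofAdd_nsmul]
    refine hcongr ?_
    filter_upwards [hc, eventually_ge_atTop (j + 1)] with n hn hjn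
    obtain ⟨w, hw⟩ := (Int.natCast_dvd_natCast.2 (factorial_dvd_factorial hjn)).trans hn
    have hj : ((j + 1)! : ℤ) = j ! * (j + 1 : ℕ) := by push_cast [factorial_succ]; ring
    rw [Pi.smul_apply, hw, Int.mul_ediv_cancel_left _ (by positivity), hj, mul_assoc,
      Int.mul_ediv_cancel_left _ (by positivity), nsmul_eq_mul]
  simpa using hseq.eq_one hG hQ 0

theorem map_eq_of_eventually_modEq
    (hψ : ∀ c : ℕ → ℤ, (∀ᶠ n in atTop, (n ! : ℤ) ∣ c n) → ψ (ofAdd c) = 1) {c d : ℕ → ℤ}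
    (h : ∀ᶠ n in atTop, c n ≡ d n [ZMOD n !]) : ψ (ofAdd c) = ψ (ofAdd d) := by
  rw [← div_eq_one, ← map_div, ← ofAdd_sub]
  exact hψ _ (h.mono fun n hn => hn.symm.dvd)

theorem map_eq_one_of_eventually_factorial_dvd_prime_pow_mul
    (hψ : ∀ c : ℕ → ℤ, (∀ᶠ n in atTop, (n ! : ℤ) ∣ c n) → ψ (ofAdd c) = 1)
    (hG : Monoid.IsTorsionFree G) (hQ : NoRatSubgroup G) (hZp : NoPadicSubgroup G)
    {p : ℕ} (hp : p.Prime) {e : ℕ → ℤ}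
    (he : ∀ᶠ n in atTop, (n ! : ℤ) ∣ p ^ n * e n) : ψ (ofAdd e) = 1 := by
  have := Fact.mk hp
  have happr {a b : ℕ → ℤ} (hab : ∀ n, a n ≡ b n [ZMOD p ^ n]) :
      ψ (ofAdd fun n => a n * e n) = ψ (ofAdd fun n => b n * e n) :=
    map_eq_of_eventually_modEq ψ hψ <|
      he.mono fun n hn => ((hab n).mul_right' (c := e n)).of_dvd hn
  let F : Multiplicative ℤ_[p] →* G :=
    MonoidHom.mk' (fun z => ψ (ofAdd fun n => z.toAdd.appr n * e n)) fun a b => by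
      rw [← map_mul, ← ofAdd_add]
      exact (happr (PadicInt.appr_add_modEq a.toAdd b.toAdd)).trans (by simp only [add_mul]; rfl)
  have hF : F = 1 := hG.padicHom_eq_one_of_not_injective hQ (hZp p F)
  simpa [F] using (happr PadicInt.appr_one_modEq).symm.trans (DFunLike.congr_fun hF (ofAdd 1))

theorem map_eq_pow_succ_of_isInvFactorialAbove
    (hψ : ∀ c : ℕ → ℤ, (∀ᶠ n in atTop, (n ! : ℤ) ∣ c n) → ψ (ofAdd c) = 1)
    (hG : Monoid.IsTorsionFree G) (hQ : NoRatSubgroup G) (hZp : NoPadicSubgroup G)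
    {N : ℕ} {x y : ℕ → ℤ}
    (hx : IsInvFactorialAbove N x) (hy : IsInvFactorialAbove (N + 1) y) :
    ψ (ofAdd x) = ψ (ofAdd y) ^ (N + 1) := by
  have hne (n : ℕ) : N ! * primesProd (N + 1) n ≠ 0 :=
    mul_ne_zero (factorial_ne_zero N) (primesProd_ne_zero _ _)
  set d := x - (N + 1) • y
  have he : ψ (ofAdd (N ! • d)) = 1 := by
    have hd (n : ℕ) : (N ! • d) n = N ! * x n - (N + 1)! * y n := by
      simp only [d]
      rw [Pi.smul_apply, Pi.sub_apply, Pi.smul_apply, nsmul_eq_mul, nsmul_eq_mul, factorial_succ]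
      push_cast
      ring
    simp only [funext hd]
    -- `N! x - (N + 1)! y` vanishes at every prime other than `N + 1`.
    by_cases hp : (N + 1).Prime
    · refine map_eq_one_of_eventually_factorial_dvd_prime_pow_mul ψ hψ hG hQ hZp hp
        (Eventually.of_forall fun n => ?_)
      calc ((n ! : ℕ) : ℤ) ∣ (((N + 1) * (N ! * primesProd (N + 1) n)) ^ n : ℕ) :=
            Int.natCast_dvd_natCast.2 <| Nat.factorial_dvd_pow_of_forall_prime_dvd
              (mul_ne_zero N.succ_ne_zero (hne n)) fun q hq hqn => by
                rcases eq_or_ne q (N + 1) with rfl | hqN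
                · exact dvd_mul_right _ _
                · exact dvd_mul_of_dvd_right (prime_dvd_factorial_mul_primesProd hq hqn hqN) _
        _ = ((N + 1 : ℕ) : ℤ) ^ n * (((N ! * primesProd (N + 1) n) ^ n : ℕ) : ℤ) := by
            rw [mul_pow, Nat.cast_mul, Nat.cast_pow]
        _ ∣ _ := mul_dvd_mul_left _ (hx.dvd_sub hy n)
    · refine hψ _ (Eventually.of_forall fun n => ?_)
      exact (Int.natCast_dvd_natCast.2 (Nat.factorial_dvd_pow_of_forall_prime_dvd (hne n)
        fun q hq hqn => prime_dvd_factorial_mul_primesProd hq hqn fun h => hp (h ▸ hq))).trans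
        (hx.dvd_sub hy n)
  have hd : ψ (ofAdd d) = 1 :=
    hG.eq_one_of_pow_eq_one (factorial_ne_zero N) (by rwa [← map_pow, ← ofAdd_nsmul])
  rw [show x = (N + 1) • y + d by simp [d], ofAdd_add, map_mul, hd, mul_one, ofAdd_nsmul,
    map_pow]

end SequenceHom

theorem map_ofAdd_one_eq_one {G : Type*} [Group G] (ψ : Multiplicative (ℕ → ℤ) →* G)
    (hψ : ∀ c : ℕ → ℤ, (∀ᶠ n in atTop, (n ! : ℤ) ∣ c n) → ψ (ofAdd c) = 1)
    (hG : Monoid.IsTorsionFree G) (hQ : NoRatSubgroup G) (hZp : NoPadicSubgroup G) :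
    ψ (ofAdd 1) = 1 := by
  choose u hu using exists_isInvFactorialAbove
  have hseq : IsFactorialRootSeq fun N => ψ (ofAdd (u N)) := fun N =>
    map_eq_pow_succ_of_isInvFactorialAbove ψ hψ hG hQ hZp (hu N) (hu (N + 1))
  rw [← hseq.eq_one hG hQ 0]
  exact map_eq_of_eventually_modEq ψ hψ (Eventually.of_forall fun n => ((hu 0).modEq_one n).symm)

theorem Ultrafilter.tendsto_lim_map {α X : Type*} [TopologicalSpace X] [CompactSpace X]
    (F : Ultrafilter α) (f : α → X) : Tendsto f F (𝓝 (F.map f).lim) := by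
  rw [Tendsto, ← Ultrafilter.coe_map]
  exact Ultrafilter.le_nhds_lim _

section CompactPowers

variable {K : Type*} [Group K] [TopologicalSpace K] [ContinuousMul K] [CompactSpace K]
  [T2Space K]

noncomputable def powLim (k : K) : Multiplicative (ℕ → ℤ) →* K where
  toFun c := ((hyperfilter ℕ).map fun n => k ^ c.toAdd n).lim
  map_one' := tendsto_nhds_unique (Ultrafilter.tendsto_lim_map _ _)
    (tendsto_const_nhds.congr fun n => by simp)
  map_mul' a b := tendsto_nhds_unique (Ultrafilter.tendsto_lim_map _ _) <|
    ((Ultrafilter.tendsto_lim_map _ _).mul (Ultrafilter.tendsto_lim_map _ _)).congr fun n => by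
      simp [zpow_add]

theorem tendsto_powLim (k : K) (c : ℕ → ℤ) :
    Tendsto (fun n => k ^ c n) (hyperfilter ℕ) (𝓝 (powLim k (ofAdd c))) :=
  Ultrafilter.tendsto_lim_map _ _

theorem powLim_ofAdd_one (k : K) : powLim k (ofAdd 1) = k :=
  tendsto_nhds_unique (tendsto_powLim k 1) (tendsto_const_nhds.congr fun n => by simp)

theorem powLim_eq_one_of_eventually_eq_zero (k : K) {c : ℕ → ℤ} (hc : ∀ᶠ n in atTop, c n = 0) :
    powLim k (ofAdd c) = 1 :=
  tendsto_nhds_unique (tendsto_powLim k c) <| tendsto_const_nhds.congr' <|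
    (hc.filter_mono Nat.hyperfilter_le_atTop).mono fun n hn => by simp [hn]

end CompactPowers

end

theorem compact_to_cotorsionFree_trivial
    (K : Type*) [Group K] [TopologicalSpace K] [IsTopologicalGroup K]
    [CompactSpace K] [T2Space K] (G : Type*) [Group G]
    (hTF : Monoid.IsTorsionFree G) (hQ : NoRatSubgroup G) (hZp : NoPadicSubgroup G)
    (φ : K →* G) : ∀ k : K, φ k = 1 := by
  intro k
  have hψ := map_eq_one_of_eventually_factorial_dvd (φ.comp (powLim k)) hTF hQ fun c hc => by
    rw [MonoidHom.comp_apply, powLim_eq_one_of_eventually_eq_zero k hc, map_one]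
  simpa [powLim_ofAdd_one] using map_ofAdd_one_eq_one _ hψ hTF hQ hZp
end

section
/- If A is an abelian group that is a homomorphic image of a compact Hausdorff abelian topological group, A is nontrivial, and A is torsion-free, then A contains a subgroup isomorphic to ℚ or a subgroup isomorphic to ℤ_p for some prime p. -/
/-- The pre-2025 Mathlib notion (removed since): no nonzero element has finite additive order. -/
def AddMonoid.IsTorsionFree (G : Type*) [AddMonoid G] : Prop :=
  ∀ g : G, g ≠ 0 → ¬IsOfFinAddOrder g
/-!
If `A` is `p`-divisible for every prime `p`, it is divisible and torsion-free, hence injective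
as a `ℤ`-module; the inclusion `ℤ → ℚ` then extends to a map `ℚ → A` sending `1` to some
`a ≠ 0`, and that map is injective because `A` is torsion-free.

Otherwise pick `a ∉ pA` and `k ∈ K` over `a`. Since `K` is compact, `pK` is closed, and the map
`ℤ_p → ℤ/p → K/pK`, `1 ↦ k`, lifts to a homomorphism `s : ℤ_p → K`: by projectivity, lifts
that are additive on any finitely generated (hence free) subgroup exist, and compactness of
`K^ℤ_p` glues them. Then `g = f ∘ s` has `g 1 ∈ a + pA`. If `g x = 0` for some `x ≠ 0` of
valuation `n`, writing `p^n = v x + p^(n+1) w` with `v ∈ ℤ` gives `p^n • g 1 = p^(n+1) • g w`,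
so `g 1 ∈ pA` since `A` is torsion-free: a contradiction.
-/

open Function

section LiftThroughQuotient

variable {G K : Type*} [AddCommGroup G] [IsAddTorsionFree G] [AddCommGroup K]

theorem QuotientAddGroup.exists_lift_additive_on_finset (N : AddSubgroup K) (ψ : G →+ K ⧸ N) (T : Finset G) :
    ∃ s : G → K, (∀ g, (s g : K ⧸ N) = ψ g) ∧ ∀ g ∈ T, ∀ h ∈ T, s (g + h) = s g + s h := by
  classical
  set H := Submodule.span ℤ (T : Set G)
  have hmk := QuotientAddGroup.mk'_surjective N
  obtain ⟨φ, hφ⟩ := Module.projective_lifting_property (QuotientAddGroup.mk' N).toIntLinearMap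
    (ψ.toIntLinearMap ∘ₗ H.subtype) hmk
  have hTH : ∀ {g}, g ∈ T → g ∈ H := fun hg => Submodule.subset_span hg
  refine ⟨fun g => if hg : g ∈ H then φ ⟨g, hg⟩ else surjInv hmk (ψ g), fun g => ?_,
    fun g hg h hh => ?_⟩
  · dsimp only
    split_ifs with hg
    · exact LinearMap.congr_fun hφ ⟨g, hg⟩
    · exact surjInv_eq hmk (ψ g)
  · simp only [dif_pos (hTH hg), dif_pos (hTH hh), dif_pos (H.add_mem (hTH hg) (hTH hh))]
    rw [← map_add]
    rfl

variable [TopologicalSpace K] [IsTopologicalAddGroup K] [CompactSpace K] [T2Space K]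

theorem QuotientAddGroup.exists_addMonoidHom_lift (N : AddSubgroup K) [IsClosed (N : Set K)]
    (ψ : G →+ K ⧸ N) : ∃ s : G →+ K, (QuotientAddGroup.mk' N).comp s = ψ := by
  classical
  set P : Finset G → Set (G → K) := fun T =>
    {s | (∀ g, (s g : K ⧸ N) = ψ g) ∧ ∀ g ∈ T, ∀ h ∈ T, s (g + h) = s g + s h}
  have hP_anti : Antitone P := fun T T' hTT' s hs =>
    ⟨hs.1, fun g hg h hh => hs.2 g (hTT' hg) h (hTT' hh)⟩
  have hP_closed : ∀ T, IsClosed (P T) := by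
    intro T
    simp only [P, Set.ofPred_and, Set.ofPred_forall]
    refine .inter (isClosed_iInter fun g => ?_) (isClosed_iInter fun g => isClosed_iInter fun _ =>
      isClosed_iInter fun h => isClosed_iInter fun _ => ?_)
    · exact isClosed_singleton.preimage (continuous_mk.comp (continuous_apply g))
    · exact isClosed_eq (continuous_apply _) ((continuous_apply g).add (continuous_apply h))
  obtain ⟨s, hs⟩ := IsCompact.nonempty_iInter_of_directed_nonempty_isCompact_isClosed P
    hP_anti.directed_ge (fun T => exists_lift_additive_on_finset N ψ T)
    (fun T => (hP_closed T).isCompact) hP_closed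
  simp only [Set.mem_iInter] at hs
  exact ⟨AddMonoidHom.mk' s fun g h => (hs {g, h}).2 g (by simp) h (by simp),
    AddMonoidHom.ext (hs ∅).1⟩

end LiftThroughQuotient

section Padic

variable {p : ℕ} [hp : Fact p.Prime]

theorem PadicInt.exists_pow_valuation_eq_intCast_mul_add {x : ℤ_[p]} (hx : x ≠ 0) :
    ∃ (v : ℤ) (w : ℤ_[p]), (p : ℤ_[p]) ^ x.valuation = v * x + p ^ (x.valuation + 1) * w := by
  set n := x.valuation
  set u := PadicInt.unitCoeff hx
  have hxu : x = u * p ^ n := PadicInt.unitCoeff_spec hx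
  obtain ⟨w, hw⟩ := Ideal.mem_span_singleton'.mp (PadicInt.appr_spec 1 ((u⁻¹ : ℤ_[p]ˣ) : ℤ_[p]))
  refine ⟨((u⁻¹ : ℤ_[p]ˣ) : ℤ_[p]).appr 1, w * u, ?_⟩
  rw [hxu]
  push_cast
  linear_combination (-(u * p ^ n : ℤ_[p])) * hw - (p : ℤ_[p]) ^ n * u.inv_mul

theorem PadicInt.injective_of_forall_nsmul_ne_map_one {A : Type*} [AddCommGroup A]
    [IsAddTorsionFree A] (g : ℤ_[p] →+ A) (hg : ∀ b : A, p • b ≠ g 1) : Injective g := by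
  refine (injective_iff_map_eq_zero g).mpr fun x hx => by_contra fun hx0 => ?_
  obtain ⟨v, w, hvw⟩ := exists_pow_valuation_eq_intCast_mul_add hx0
  set n := x.valuation
  have key : p ^ n • g 1 = p ^ n • (p • g w) := calc
    p ^ n • g 1 = g ((p : ℤ_[p]) ^ n) := by rw [← map_nsmul, nsmul_one, Nat.cast_pow]
    _ = v • g x + p ^ (n + 1) • g w := by
      rw [hvw, map_add, ← zsmul_eq_mul, map_zsmul, ← Nat.cast_pow, ← nsmul_eq_mul, map_nsmul]
    _ = p ^ n • (p • g w) := by rw [hx, smul_zero, zero_add, pow_succ, mul_smul]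
  exact hg (g w) (nsmul_right_injective (pow_ne_zero n hp.out.ne_zero) key).symm

theorem exists_padicInt_addMonoidHom_forall_nsmul_ne_map_one {K A : Type*} [AddCommGroup K]
    [TopologicalSpace K] [IsTopologicalAddGroup K] [CompactSpace K] [T2Space K] [AddCommGroup A]
    (f : K →+ A) (k : K) (hk : ∀ b : A, p • b ≠ f k) :
    ∃ g : ℤ_[p] →+ A, ∀ b : A, p • b ≠ g 1 := by
  set N := (nsmulAddMonoidHom p : K →+ K).range
  have : IsClosed (N : Set K) := by
    rw [AddMonoidHom.coe_range]
    exact (isCompact_range (continuous_nsmul p)).isClosed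
  have hpk : zmultiplesHom _ (k : K ⧸ N) p = 0 := by
    rw [zmultiplesHom_apply, natCast_zsmul, ← QuotientAddGroup.mk_nsmul,
      QuotientAddGroup.eq_zero_iff]
    exact ⟨k, rfl⟩
  obtain ⟨s, hs⟩ := QuotientAddGroup.exists_addMonoidHom_lift N
    ((ZMod.lift p ⟨_, hpk⟩).comp PadicInt.toZMod.toAddMonoidHom)
  have hs1 : (k : K ⧸ N) = s 1 := by
    have := DFunLike.congr_fun hs 1
    simp only [AddMonoidHom.comp_apply, RingHom.toAddMonoidHom_eq_coe, AddMonoidHom.coe_coe,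
      map_one, QuotientAddGroup.mk'_apply] at this
    rw [this, ← Int.cast_one, ZMod.lift_coe, zmultiplesHom_apply, one_zsmul]
  obtain ⟨y, hy⟩ := QuotientAddGroup.eq.mp hs1
  refine ⟨f.comp s, fun b hb => hk (b - f y) ?_⟩
  rw [smul_sub, hb, ← map_nsmul, show p • y = -k + s 1 from hy]
  simp

end Padic

theorem nsmul_surjective_of_forall_prime {A : Type*} [AddCommMonoid A]
    (h : ∀ p : ℕ, p.Prime → Surjective fun a : A => p • a) {n : ℕ} (hn : n ≠ 0) :
    Surjective fun a : A => n • a := by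
  induction n using Nat.recOnMul with
  | zero => exact absurd rfl hn
  | one => exact fun a => ⟨a, one_smul ℕ a⟩
  | prime p hp => exact h p hp
  | mul a b ha hb =>
    obtain ⟨ha0, hb0⟩ := mul_ne_zero_iff.mp hn
    simpa only [mul_smul, Function.comp_def] using (ha ha0).comp (hb hb0)

theorem exists_injective_rat_addMonoidHom (A : Type*) [AddCommGroup A] [IsAddTorsionFree A]
    [DivisibleBy A ℤ] [Nontrivial A] : ∃ g : ℚ →+ A, Injective g := by
  obtain ⟨a, ha⟩ := exists_ne (0 : A)
  obtain ⟨g, hg⟩ := (Module.Baer.of_divisible A).extension_property_addMonoidHom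
    (Int.castAddHom ℚ) Int.cast_injective (zmultiplesHom A a)
  refine ⟨g, (injective_iff_map_eq_zero g).mpr fun q hq => ?_⟩
  have hnum : q.num • a = 0 := calc
    q.num • a = g q.num := (DFunLike.congr_fun hg q.num).symm
    _ = q.den • g q := by rw [← map_nsmul, nsmul_eq_mul, Rat.den_mul_eq_num]
    _ = 0 := by rw [hq, smul_zero]
  simpa [ha] using hnum

theorem image_of_compact_abelian_contains_rat_or_padic
    (K : Type*) [AddCommGroup K] [TopologicalSpace K] [IsTopologicalAddGroup K]
    [CompactSpace K] [T2Space K]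
    (A : Type*) [AddCommGroup A] [Nontrivial A]
    (f : K →+ A) (hf : Function.Surjective f)
    (hTF : AddMonoid.IsTorsionFree A) :
    (∃ g : ℚ →+ A, Function.Injective g) ∨
      ∃ (p : ℕ) (_ : Fact p.Prime), ∃ g : PadicInt p →+ A, Function.Injective g := by
  have : IsAddTorsionFree A := .of_not_isOfFinAddOrder hTF
  by_cases h : ∃ p : ℕ, p.Prime ∧ ∃ a : A, ∀ b : A, p • b ≠ a
  · obtain ⟨p, hp, a, ha⟩ := h
    have := Fact.mk hp
    obtain ⟨k, rfl⟩ := hf a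
    obtain ⟨g, hg⟩ := exists_padicInt_addMonoidHom_forall_nsmul_ne_map_one f k ha
    exact Or.inr ⟨p, inferInstance, g, PadicInt.injective_of_forall_nsmul_ne_map_one g hg⟩
  · push Not at h
    let : DivisibleBy A ℕ := divisibleByOfSMulRightSurj A ℕ (nsmul_surjective_of_forall_prime h)
    let := AddGroup.divisibleByIntOfDivisibleByNat A
    exact Or.inl (exists_injective_rat_addMonoidHom A)
end

section
/- If a group G contains an element of prime order p, then there exists a discontinuous group homomorphism from the compact topological group ∏_{n ∈ ℕ} ℤ/pℤ (with the product topology, each factor discrete) to G; in particular G is not lcH-slender. -/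
universe u

/-!
Over the field `ZMod p` there is a linear functional on `ℕ → ZMod p` that vanishes on all
finitely supported sequences but not on the constant sequence `1` (extend one from the quotient
by the finitely supported sequences). Its kernel is not open: an open subgroup of the product
contains every sequence that is trivial on some finite set `I`, and together with the sequences
supported on `I` these generate the whole product. Composing with the embedding `ZMod p ↪ G`,
`a ↦ g ^ a`, does not change the kernel.
-/

open Function

section ZPowers

variable {G : Type*} [Group G]

noncomputable def zmodZPowersHom (g : G) : Multiplicative (ZMod (orderOf g)) →* G :=
  AddMonoidHom.toMultiplicativeLeft <|
    ZMod.lift _ ⟨zmultiplesHom (Additive G) (Additive.ofMul g), by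
      simp [← ofMul_pow, pow_orderOf_eq_one]⟩

@[simp]
theorem zmodZPowersHom_ofAdd_intCast (g : G) (k : ℤ) :
    zmodZPowersHom g (Multiplicative.ofAdd (k : ZMod (orderOf g))) = g ^ k := by
  simp [zmodZPowersHom]

theorem zmodZPowersHom_injective (g : G) : Injective (zmodZPowersHom g) := by
  refine (injective_iff_map_eq_one _).mpr fun a ha => ?_
  obtain ⟨k, hk⟩ := ZMod.intCast_surjective a.toAdd
  rw [← ofAdd_toAdd a, ← hk] at ha ⊢
  rw [zmodZPowersHom_ofAdd_intCast, ← orderOf_dvd_iff_zpow_eq_one,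
    ← ZMod.intCast_zmod_eq_zero_iff_dvd] at ha
  rw [ha, ofAdd_zero]

end ZPowers

theorem exists_linearMap_eq_zero_of_hasFiniteSupport_apply_one_ne_zero
    (K ι : Type*) [DivisionRing K] [Infinite ι] :
    ∃ F : (ι → K) →ₗ[K] K, (∀ x, HasFiniteSupport x → F x = 0) ∧ F 1 ≠ 0 := by
  have hone : (1 : ι → K) ∉ LinearMap.range (Finsupp.lcoeFun (R := K)) := by
    rintro ⟨f, hf⟩
    have hfin : HasFiniteSupport (1 : ι → K) := hf ▸ f.hasFiniteSupport
    exact Set.infinite_univ (by simpa [HasFiniteSupport] using hfin)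
  obtain ⟨F, hF_one, hF_range⟩ := Submodule.exists_dual_map_eq_bot_of_notMem hone inferInstance
  refine ⟨F, fun x hx => ?_, hF_one⟩
  have hx : x ∈ LinearMap.range (Finsupp.lcoeFun (R := K)) :=
    ⟨Finsupp.ofSupportFinite x hx, rfl⟩
  simpa [hF_range] using Submodule.mem_map_of_mem (f := F) hx

theorem Pi.subgroup_eq_top_of_isOpen_of_hasFiniteMulSupport_mem {ι M : Type*} [Group M]
    [TopologicalSpace M]
    {H : Subgroup (ι → M)} (hH : IsOpen (H : Set (ι → M)))
    (hfin : ∀ x, HasFiniteMulSupport x → x ∈ H) : H = ⊤ := by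
  classical
  obtain ⟨I, U, hU, hIU⟩ := isOpen_pi_iff.mp hH 1 H.one_mem
  refine (Subgroup.eq_top_iff' H).mpr fun x => ?_
  have hoff : I.piecewise (1 : ι → M) x ∈ H := hIU fun i hi => by
    simpa [Finset.mem_coe.mp hi] using (hU i hi).2
  have hon : I.piecewise x (1 : ι → M) ∈ H := hfin _ <| I.finite_toSet.subset fun i hi =>
    by_contra fun hiI => hi (I.piecewise_eq_of_notMem _ _ hiI)
  have hsplit : I.piecewise x (1 : ι → M) * I.piecewise (1 : ι → M) x = x := by
    ext i; by_cases hi : i ∈ I <;> simp [hi]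
  exact hsplit ▸ H.mul_mem hon hoff

theorem exists_monoidHom_pi_multiplicative_not_isOpen_ker (K ι : Type*) [DivisionRing K]
    [Infinite ι] [TopologicalSpace (Multiplicative K)] :
    ∃ ψ : (ι → Multiplicative K) →* Multiplicative K,
      ¬ IsOpen (ψ.ker : Set (ι → Multiplicative K)) := by
  obtain ⟨F, hF_fin, hF_one⟩ :=
    exists_linearMap_eq_zero_of_hasFiniteSupport_apply_one_ne_zero K ι
  let ψ : (ι → Multiplicative K) →* Multiplicative K :=
    F.toAddMonoidHom.toMultiplicative.comp (MulEquiv.piMultiplicative fun _ => K).symm.toMonoidHom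
  refine ⟨ψ, fun hopen => hF_one ?_⟩
  have hker := Pi.subgroup_eq_top_of_isOpen_of_hasFiniteMulSupport_mem hopen
    fun x hx => hF_fin (Multiplicative.toAdd ∘ x) hx
  exact (Subgroup.eq_top_iff' _).mp hker (fun _ => Multiplicative.ofAdd 1)

theorem not_lchSlender_of_prime_order (G : Type*) [Group G] (p : ℕ) (hp : p.Prime)
    (g : G) (hg : orderOf g = p) :
    (∃ φ : (∀ _ : ℕ, Multiplicative (ZMod p)) →* G,
      ¬ @IsOpen _ (@Pi.topologicalSpace ℕ (fun _ => Multiplicative (ZMod p)) (fun _ => ⊥))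
        (φ.ker : Set (∀ _ : ℕ, Multiplicative (ZMod p)))) ∧
      ¬ LCHSlender.{0} G := by
  subst hg
  have : Fact (orderOf g).Prime := ⟨hp⟩
  let : TopologicalSpace (Multiplicative (ZMod (orderOf g))) := ⊥
  have : DiscreteTopology (Multiplicative (ZMod (orderOf g))) := ⟨rfl⟩
  obtain ⟨ψ, hψ⟩ := exists_monoidHom_pi_multiplicative_not_isOpen_ker (ZMod (orderOf g)) ℕ
  have hker : ¬ IsOpen
      (((zmodZPowersHom g).comp ψ).ker : Set (ℕ → Multiplicative (ZMod (orderOf g)))) := by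
    rwa [MonoidHom.ker_comp_of_injective _ _ (zmodZPowersHom_injective g)]
  exact ⟨⟨_, hker⟩, fun hslender => hker (hslender _ _)⟩
end

section
/- If a group G contains a subgroup isomorphic to ℚ, then there exists a group homomorphism from the topological group ℝ (with its usual topology) to G whose kernel is not open; hence G is not lcH-slender. -/
universe u

/-
Compose `f` with a nonzero `ℚ`-linear functional `ℝ → ℚ` (it exists because `ℝ` is a free
`ℚ`-module). The composite is nontrivial, and an open subgroup of a connected group is closed
and hence everything, so its kernel cannot be open.
-/

instance {X : Type*} [TopologicalSpace X] [ConnectedSpace X] : ConnectedSpace (Multiplicative X) :=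
  inferInstanceAs (ConnectedSpace X)

theorem MonoidHom.eq_one_of_isOpen_ker {L G : Type*} [Group L] [TopologicalSpace L]
    [SeparatelyContinuousMul L] [PreconnectedSpace L] [Group G] (φ : L →* G)
    (h : IsOpen (φ.ker : Set L)) : φ = 1 := by
  have hclopen : IsClopen (φ.ker : Set L) := ⟨φ.ker.isClosed_of_isOpen h, h⟩
  rw [← MonoidHom.ker_eq_top_iff, ← Subgroup.coe_eq_univ]
  exact hclopen.eq_univ ⟨1, φ.ker.one_mem⟩

theorem not_lchSlender_of_rat_subgroup (G : Type*) [Group G]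
    (f : Multiplicative ℚ →* G) (hf : Function.Injective f) :
    (∃ φ : Multiplicative ℝ →* G, ¬ IsOpen (φ.ker : Set (Multiplicative ℝ))) ∧
      ¬ LCHSlender.{0} G := by
  obtain ⟨ψ, hψ⟩ := Module.Projective.exists_dual_eq_one ℚ (one_ne_zero : (1 : ℝ) ≠ 0)
  let φ : Multiplicative ℝ →* G := f.comp ψ.toAddMonoidHom.toMultiplicative
  have hφ : ¬ IsOpen (φ.ker : Set (Multiplicative ℝ)) := fun hopen => by
    have h1 : f (.ofAdd (ψ 1)) = f 1 := by
      simpa [φ] using DFunLike.congr_fun (φ.eq_one_of_isOpen_ker hopen) (.ofAdd 1)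
    simpa [hψ] using hf h1
  exact ⟨⟨φ, hφ⟩, fun hG => hφ (hG _ φ)⟩
end

section
/- If a group G is such that every abstract group homomorphism from any completely metrizable topological group to G has open kernel (G is cm-slender), then G is torsion-free and contains no subgroup isomorphic to ℚ and no subgroup isomorphic to ℤ_p for any prime p. -/
universe u

/-- `G` is cm-slender: every abstract group homomorphism from a completely metrizable
topological group to `G` has open kernel. -/
def CMSlender (G : Type*) [Group G] : Prop :=
  ∀ (L : Type u) [Group L] [tL : TopologicalSpace L] [IsTopologicalGroup L],
    (∃ m : MetricSpace L,
        m.toPseudoMetricSpace.toUniformSpace.toTopologicalSpace = tL ∧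
          @CompleteSpace L m.toPseudoMetricSpace.toUniformSpace) →
    ∀ φ : L →* G, IsOpen (φ.ker : Set L)

/-! An open subgroup of a topological group is also closed. Hence, for a cm-slender `G`, a
homomorphism into `G` from a completely metrizable group is trivial as soon as its kernel is dense
or its domain is connected, and it cannot be injective unless its domain is discrete.
* A `ℚ`-linear retraction `ℝ → ℚ` followed by an embedding `ℚ → G` would be nontrivial on the
  connected group `ℝ`.
* An element of prime order `p` gives an embedding `ZMod p → G`. Precompose it with a linear
  functional on `ℕ → ZMod p` that kills the dense subgroup of finitely supported sequences but
  not the constant `1`.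
* `ℤ_[p]` is compact and infinite, so it is not discrete.
-/

open Filter Topology TopologicalSpace Function

theorem dense_setOf_eventuallyEq_zero_cofinite {ι α : Type*} [Zero α] [TopologicalSpace α] :
    Dense {x : ι → α | x =ᶠ[cofinite] 0} := by
  intro x
  have htrunc : Tendsto (fun s : Finset ι => (s : Set ι).indicator x) atTop (𝓝 x) :=
    tendsto_pi_nhds.2 fun i => tendsto_const_nhds.congr' <|
      (eventually_ge_atTop {i}).mono fun s hs => by
        simp [Set.indicator_of_mem (Finset.singleton_subset_iff.1 hs)]
  refine mem_closure_of_tendsto htrunc (Eventually.of_forall fun s => ?_)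
  exact mem_of_superset s.finite_toSet.compl_mem_cofinite fun i hi => Set.indicator_of_notMem hi x

theorem exists_dual_apply_one_eq_one_of_eventuallyEq_zero {ι K : Type*} [Field K]
    (l : Filter ι) [l.NeBot] :
    ∃ ℓ : Module.Dual K (ι → K), ℓ 1 = 1 ∧ ∀ x, x =ᶠ[l] 0 → ℓ x = 0 := by
  let germ : (ι → K) →ₗ[K] Germ l K := { Germ.coeAddHom l with map_smul' := fun _ _ => rfl }
  obtain ⟨f, hf⟩ := Module.Projective.exists_dual_eq_one K (one_ne_zero : (1 : Germ l K) ≠ 0)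
  exact ⟨f ∘ₗ germ, hf, fun x hx => by simp [germ, Germ.coe_eq.2 hx]⟩

theorem exists_prime_injective_zmod_of_isOfFinOrder {G : Type*} [Group G] {g : G}
    (hg : IsOfFinOrder g) (hg1 : g ≠ 1) :
    ∃ p, p.Prime ∧ ∃ f : Multiplicative (ZMod p) →* G, Injective f := by
  obtain ⟨p, hp, hpg⟩ := Nat.exists_prime_and_dvd (mt orderOf_eq_one_iff.1 hg1)
  set a := g ^ (orderOf g / p)
  have hcard : Nat.card (Subgroup.zpowers a) = p := by
    rw [Nat.card_zpowers, orderOf_pow_orderOf_div hg.orderOf_pos.ne' hpg]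
  refine ⟨_, hcard ▸ hp, (Subgroup.zpowers a).subtype.comp
    (zmodCyclicMulEquiv inferInstance).toMonoidHom, ?_⟩
  exact (Subgroup.subtype_injective _).comp (MulEquiv.injective _)

namespace CMSlender

variable {G : Type*} [Group G] (hG : CMSlender.{0} G)
  {A : Type} [AddGroup A] [TopologicalSpace A] [IsTopologicalAddGroup A]
  [IsCompletelyMetrizableSpace A] (φ : A →+ Additive G)
include hG

theorem isOpen_ker : IsOpen (φ.ker : Set A) :=
  hG (Multiplicative A) (IsCompletelyMetrizableSpace.complete (X := A)) φ.toMultiplicativeLeft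

theorem eq_zero_of_dense_ker (hd : Dense (φ.ker : Set A)) : φ = 0 := by
  have hclosed := AddSubgroup.isClosed_of_isOpen φ.ker (hG.isOpen_ker φ)
  ext x
  simpa using hclosed.closure_subset (hd x)

theorem eq_zero_of_connectedSpace [ConnectedSpace A] : φ = 0 := by
  have hclopen : IsClopen (φ.ker : Set A) :=
    ⟨AddSubgroup.isClosed_of_isOpen φ.ker (hG.isOpen_ker φ), hG.isOpen_ker φ⟩
  ext x
  have hx : x ∈ (φ.ker : Set A) := hclopen.eq_univ ⟨0, φ.ker.zero_mem⟩ ▸ Set.mem_univ x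
  simpa using hx

theorem discreteTopology_of_injective (hφ : Injective φ) : DiscreteTopology A := by
  refine discreteTopology_of_isOpen_singleton_zero ?_
  simpa [(AddMonoidHom.ker_eq_bot_iff φ).2 hφ] using hG.isOpen_ker φ

theorem not_injective_zmod (p : ℕ) [Fact p.Prime] (f : Multiplicative (ZMod p) →* G) :
    ¬Injective f := by
  intro hf
  obtain ⟨ℓ, hℓ1, hℓ⟩ :=
    exists_dual_apply_one_eq_one_of_eventuallyEq_zero (K := ZMod p) (cofinite : Filter ℕ)
  have hzero : f.toAdditiveRight.comp ℓ.toAddMonoidHom = 0 :=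
    hG.eq_zero_of_dense_ker _ <| dense_setOf_eventuallyEq_zero_cofinite.mono fun x hx => by
      simp [hℓ x hx]
  have hf1 : f.toAdditiveRight (ℓ 1) = 0 := DFunLike.congr_fun hzero 1
  rw [hℓ1] at hf1
  exact one_ne_zero ((injective_iff_map_eq_zero f.toAdditiveRight).1 hf _ hf1)

theorem isTorsionFree : Monoid.IsTorsionFree G := fun _ hg1 hg => by
  obtain ⟨p, hp, f, hf⟩ := exists_prime_injective_zmod_of_isOfFinOrder hg hg1
  have := Fact.mk hp
  exact hG.not_injective_zmod p f hf

theorem noRatSubgroup : NoRatSubgroup G := fun f hf => by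
  obtain ⟨π, hπ⟩ := Module.Projective.exists_dual_eq_one ℚ (one_ne_zero : (1 : ℝ) ≠ 0)
  have hzero := hG.eq_zero_of_connectedSpace (f.toAdditiveRight.comp π.toAddMonoidHom)
  have hf1 : f.toAdditiveRight (π 1) = 0 := DFunLike.congr_fun hzero 1
  rw [hπ] at hf1
  exact one_ne_zero ((injective_iff_map_eq_zero f.toAdditiveRight).1 hf _ hf1)

theorem noPadicSubgroup : NoPadicSubgroup G := fun p _ f hf => by
  have := hG.discreteTopology_of_injective f.toAdditiveRight hf
  have := finite_of_compact_of_discrete (X := ℤ_[p])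
  exact not_finite ℤ_[p]

end CMSlender

theorem cmSlender_necessary (G : Type*) [Group G] (h : CMSlender.{0} G) :
    Monoid.IsTorsionFree G ∧ NoRatSubgroup G ∧ NoPadicSubgroup G :=
  ⟨h.isTorsionFree, h.noRatSubgroup, h.noPadicSubgroup⟩
end
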